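/- arXiv:1910.02737 — 2 statements merged into one kernel-verified Lean document; each statement's English description precedes it below -/
import Mathlib

section
/- Every entry of an admissible configuration of size n (n ≥ 1) is at most 2n − 1. -/
/-- The maximum entry of a finite set of integers (`0` for the empty set). -/
def fmax (C : Finset ℤ) : ℤ := WithBot.unbotD 0 C.max

/-- The minimum entry of a finite set of integers (`0` for the empty set). -/
def fmin (C : Finset ℤ) : ℤ := WithTop.untopD 0 C.min

/-- A *chain* is a nonempty set of integers of the form `{c, c-2, …, c-2k}`. -/
def IsChainSet (C : Finset ℤ) : Prop :=
  ∃ (c : ℤ) (k : ℕ), C = (Finset.range (k + 1)).image (fun i : ℕ => c - 2 * (i : ℤ))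

/-- Two chains with disjoint entries, with maxima `A, B` and minima `a, b`, are *linked*
if `A > B > a` or `B > A > b`. -/
def LinkedChains (C D : Finset ℤ) : Prop :=
  Disjoint C D ∧
    ((fmax D < fmax C ∧ fmin C < fmax D) ∨ (fmax C < fmax D ∧ fmin D < fmax C))

/-- The set of all entries of a collection of chains. -/
def entriesOf (S : Finset (Finset ℤ)) : Finset ℤ := S.biUnion id

/-- A finite collection of pairwise disjoint chains. -/
def IsChainCollection (S : Finset (Finset ℤ)) : Prop :=
  (∀ C ∈ S, IsChainSet C) ∧ ∀ C ∈ S, ∀ D ∈ S, C ≠ D → Disjoint C D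

/-- A collection of pairwise disjoint chains is *interlaced* if any two of its chains are
joined by a finite sequence of chains of the collection in which consecutive chains are
linked. -/
def Interlaced (S : Finset (Finset ℤ)) : Prop :=
  ∀ C ∈ S, ∀ D ∈ S,
    Relation.ReflTransGen (fun X Y => X ∈ S ∧ Y ∈ S ∧ LinkedChains X Y) C D

/-- An *admissible configuration of size `n`*: an interlaced collection of pairwise disjoint
chains of positive integers with `n` entries in total and smallest entry equal to `1`. -/
def AdmissibleConfig (n : ℕ) (S : Finset (Finset ℤ)) : Prop :=
  IsChainCollection S ∧ Interlaced S ∧ (entriesOf S).card = n ∧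
    (∀ x ∈ entriesOf S, 0 < x) ∧ (1 : ℤ) ∈ entriesOf S

/-!
Let `M` be the largest entry. Every integer `t` with `1 ≤ t < M` lies in the half-open span
`[min C, max C)` of some chain `C`: otherwise the chains with `max C ≤ t` and those with
`min C > t` would split the collection, and linked chains never cross such a cut, while the
chain through `1` lies on the first side and the chain through `M` on the second. A chain with
`m` entries spans `2m - 2` integers, so `M - 1 ≤ ∑ (2|C| - 2) = 2n - 2|S| ≤ 2n - 2`.
-/

open Finset

lemma fmax_mem {C : Finset ℤ} (h : C.Nonempty) : fmax C ∈ C := by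
  rw [fmax, ← coe_max' h, WithBot.unbotD_coe]
  exact max'_mem C h

lemma le_fmax {C : Finset ℤ} {x : ℤ} (hx : x ∈ C) : x ≤ fmax C := by
  rw [fmax, ← coe_max' ⟨x, hx⟩, WithBot.unbotD_coe]
  exact le_max' _ _ hx

lemma fmin_mem {C : Finset ℤ} (h : C.Nonempty) : fmin C ∈ C := by
  rw [fmin, ← coe_min' h, WithTop.untopD_coe]
  exact min'_mem C h

lemma fmin_le {C : Finset ℤ} {x : ℤ} (hx : x ∈ C) : fmin C ≤ x := by
  rw [fmin, ← coe_min' ⟨x, hx⟩, WithTop.untopD_coe]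
  exact min'_le _ _ hx

lemma IsChainSet.card_Ico_fmin_fmax_add_two {C : Finset ℤ} (hC : IsChainSet C) :
    #(Ico (fmin C) (fmax C)) + 2 = 2 * #C := by
  obtain ⟨c, k, hCck⟩ := hC
  have hmem : ∀ x, x ∈ C ↔ ∃ i ≤ k, c - 2 * (i : ℤ) = x := by simp [hCck]
  have hne : C.Nonempty := by simp [hCck]
  have hmax : fmax C = c := by
    obtain ⟨i, -, hi⟩ := (hmem _).1 (fmax_mem hne)
    exact le_antisymm (by omega) (le_fmax ((hmem c).2 ⟨0, k.zero_le, by simp⟩))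
  have hmin : fmin C = c - 2 * k := by
    obtain ⟨i, hik, hi⟩ := (hmem _).1 (fmin_mem hne)
    exact le_antisymm (fmin_le ((hmem _).2 ⟨k, le_rfl, rfl⟩)) (by omega)
  have hinj : Function.Injective (fun i : ℕ => c - 2 * (i : ℤ)) := fun i j h => by
    simp only at h
    omega
  rw [hmax, hmin, Int.card_Ico, hCck, card_image_of_injective _ hinj, card_range]
  omega

lemma IsChainCollection.sum_card_Ico_fmin_fmax_add {S : Finset (Finset ℤ)}
    (hS : IsChainCollection S) :
    ∑ C ∈ S, #(Ico (fmin C) (fmax C)) + 2 * #S = 2 * #(entriesOf S) := by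
  have hdisj : (S : Set (Finset ℤ)).PairwiseDisjoint id :=
    fun C hC D hD hCD => hS.2 C hC D hD hCD
  rw [entriesOf, card_biUnion hdisj, mul_sum, S.card_eq_sum_ones, mul_sum, ← sum_add_distrib]
  exact sum_congr rfl fun C hC => (hS.1 C hC).card_Ico_fmin_fmax_add_two

lemma LinkedChains.fmax_le_of_fmax_le {X Y : Finset ℤ} (hXY : LinkedChains X Y) {t : ℤ}
    (hX : fmax X ≤ t) (hY : fmin Y ≤ t → fmax Y ≤ t) : fmax Y ≤ t := by
  rcases hXY.2 with h | h <;> omega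

lemma Interlaced.exists_fmin_le_lt_fmax {S : Finset (Finset ℤ)} (hS : Interlaced S)
    {C D : Finset ℤ} (hC : C ∈ S) (hD : D ∈ S) {t : ℤ} (hCt : fmin C ≤ t) (hDt : t < fmax D) :
    ∃ X ∈ S, fmin X ≤ t ∧ t < fmax X := by
  by_contra! hcut
  have hpath : ∀ Y, Relation.ReflTransGen
      (fun X Y => X ∈ S ∧ Y ∈ S ∧ LinkedChains X Y) C Y → fmax Y ≤ t := by
    intro Y h
    induction h with
    | refl => exact hcut C hC hCt
    | tail _ step ih =>
      obtain ⟨-, hYS, hlink⟩ := step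
      exact hlink.fmax_le_of_fmax_le ih (hcut _ hYS)
  exact (hpath D (hS C hC D hD)).not_gt hDt

theorem admissible_config_entry_bound_general (n : ℕ) (S : Finset (Finset ℤ))
    (hS : AdmissibleConfig n S) (x : ℤ) (hx : x ∈ entriesOf S) :
    x ≤ 2 * (n : ℤ) - 1 := by
  obtain ⟨hchains, hinter, hcard, -, h1⟩ := hS
  set M := fmax (entriesOf S)
  obtain ⟨C₁, hC₁, h1C₁⟩ := mem_biUnion.1 h1
  obtain ⟨Cₘ, hCₘ, hMCₘ⟩ := mem_biUnion.1 (fmax_mem ⟨1, h1⟩)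
  have hcover : Ico 1 M ⊆ S.biUnion fun C => Ico (fmin C) (fmax C) := by
    intro t ht
    rw [mem_Ico] at ht
    obtain ⟨X, hX, hXt⟩ := hinter.exists_fmin_le_lt_fmax hC₁ hCₘ
      ((fmin_le h1C₁).trans ht.1) (ht.2.trans_le (le_fmax hMCₘ))
    exact mem_biUnion.2 ⟨X, hX, mem_Ico.2 hXt⟩
  have hspan := (card_le_card hcover).trans card_biUnion_le
  have hsum := hchains.sum_card_Ico_fmin_fmax_add
  have hSpos : 0 < #S := card_pos.2 ⟨C₁, hC₁⟩
  rw [Int.card_Ico] at hspan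
  have hxM : x ≤ M := le_fmax hx
  omega

/-- Every entry of an admissible configuration of size `n ≥ 1` is at most `2n - 1`. -/
theorem admissible_config_entry_bound (n : ℕ) (hn : 1 ≤ n) (S : Finset (Finset ℤ))
    (hS : AdmissibleConfig n S) (x : ℤ) (hx : x ∈ entriesOf S) :
    x ≤ 2 * (n : ℤ) - 1 :=
  admissible_config_entry_bound_general n S hS x hx
end

section
/- Let U be a collection of pairwise disjoint chains of positive integers such that all chains of U have the same average value (max C + min C)/2 and the smallest of all entries equals 1. Then either U consists of a single chain, or U consists of exactly two chains, namely {2a−1, 2a−3, …, 3, 1} and {a+b−1, a+b−3, …, a−b+1} for some integers a > b ≥ 1 with a + b odd (equivalently, a and b of different parity). -/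
/-!
The chain through `1` is `{1, 3, …, 2a-1}`, so every chain of `U` has centre
`(max + min) / 2 = a`. Two chains with the same centre whose maxima have the same parity meet
(the smaller maximum lies in both); hence every other chain of `U` has an even maximum, and
there is at most one of them. Being determined by its maximum and minimum, it is
`{a-b+1, …, a+b-1}`.
-/

lemma fmax_eq_max' {C : Finset ℤ} (h : C.Nonempty) : fmax C = C.max' h := by
  rw [fmax, ← Finset.coe_max' h, WithBot.unbotD_coe]

lemma fmin_eq_min' {C : Finset ℤ} (h : C.Nonempty) : fmin C = C.min' h := by
  rw [fmin, ← Finset.coe_min' h, WithTop.untopD_coe]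

lemma mem_image_range_sub_two_mul_iff (c : ℤ) (k : ℕ) (x : ℤ) :
    x ∈ (Finset.range (k + 1)).image (fun i : ℕ => c - 2 * (i : ℤ)) ↔
      c - 2 * k ≤ x ∧ x ≤ c ∧ 2 ∣ c - x := by
  simp only [Finset.mem_image, Finset.mem_range]
  constructor
  · rintro ⟨i, hi, rfl⟩
    omega
  · rintro ⟨hlo, hhi, j, hj⟩
    exact ⟨((c - x) / 2).toNat, by omega, by omega⟩

lemma mem_image_range_add_two_mul_iff (lo : ℤ) (n : ℕ) (x : ℤ) :
    x ∈ (Finset.range n).image (fun i : ℕ => lo + 2 * (i : ℤ)) ↔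
      lo ≤ x ∧ x < lo + 2 * n ∧ 2 ∣ x - lo := by
  simp only [Finset.mem_image, Finset.mem_range]
  constructor
  · rintro ⟨i, hi, rfl⟩
    omega
  · rintro ⟨hlo, hhi, j, hj⟩
    exact ⟨((x - lo) / 2).toNat, by omega, by omega⟩

namespace IsChainSet

variable {C D : Finset ℤ}

lemma nonempty (hC : IsChainSet C) : C.Nonempty := by
  obtain ⟨c, k, rfl⟩ := hC
  simp

lemma fmax_mem (hC : IsChainSet C) : fmax C ∈ C := by
  rw [fmax_eq_max' hC.nonempty]
  exact Finset.max'_mem _ _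

lemma fmin_mem (hC : IsChainSet C) : fmin C ∈ C := by
  rw [fmin_eq_min' hC.nonempty]
  exact Finset.min'_mem _ _

lemma mem_iff (hC : IsChainSet C) {x : ℤ} :
    x ∈ C ↔ fmin C ≤ x ∧ x ≤ fmax C ∧ 2 ∣ fmax C - x := by
  obtain ⟨c, k, rfl⟩ := hC
  have hmem := mem_image_range_sub_two_mul_iff c k
  have hmax : fmax ((Finset.range (k + 1)).image (fun i : ℕ => c - 2 * (i : ℤ))) = c := by
    rw [fmax_eq_max' (by simp)]
    exact le_antisymm (Finset.max'_le _ _ _ fun y hy => ((hmem y).1 hy).2.1)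
      (Finset.le_max' _ _ ((hmem c).2 (by omega)))
  have hmin : fmin ((Finset.range (k + 1)).image (fun i : ℕ => c - 2 * (i : ℤ))) =
      c - 2 * k := by
    rw [fmin_eq_min' (by simp)]
    exact le_antisymm (Finset.min'_le _ _ ((hmem _).2 (by omega)))
      (Finset.le_min' _ _ _ fun y hy => ((hmem y).1 hy).1)
  rw [hmax, hmin, hmem]

lemma two_dvd_fmax_sub_fmin (hC : IsChainSet C) : 2 ∣ fmax C - fmin C :=
  (hC.mem_iff.1 hC.fmin_mem).2.2

lemma fmin_le_fmax (hC : IsChainSet C) : fmin C ≤ fmax C :=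
  (hC.mem_iff.1 hC.fmax_mem).1

lemma eq_image_range {lo : ℤ} {n : ℕ} (hC : IsChainSet C) (hlo : fmin C = lo)
    (hhi : fmax C + 2 = lo + 2 * n) :
    C = (Finset.range n).image (fun i : ℕ => lo + 2 * (i : ℤ)) := by
  ext x
  rw [hC.mem_iff, mem_image_range_add_two_mul_iff]
  have := hC.two_dvd_fmax_sub_fmin
  omega

lemma fmin_eq_one (hC : IsChainSet C) (hpos : 0 < fmin C) (h1 : 1 ∈ C) : fmin C = 1 := by
  have := (hC.mem_iff.1 h1).1
  omega

lemma exists_eq_image_range_odd (hC : IsChainSet C) (hmin : fmin C = 1) :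
    ∃ a : ℕ, fmax C = 2 * a - 1 ∧
      C = (Finset.range a).image (fun i : ℕ => (2 * i + 1 : ℤ)) := by
  have := hC.two_dvd_fmax_sub_fmin
  have := hC.fmin_le_fmax
  refine ⟨((fmax C + 1) / 2).toNat, by omega, ?_⟩
  simp_rw [add_comm _ (1 : ℤ)]
  exact hC.eq_image_range hmin (by omega)

lemma exists_eq_image_range_of_fmax_add_fmin_eq {a : ℕ} (hC : IsChainSet C)
    (hpos : 0 < fmin C) (hcentre : fmax C + fmin C = 2 * a) (heven : 2 ∣ fmax C) :
    ∃ b : ℕ, 1 ≤ b ∧ b < a ∧ Odd (a + b) ∧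
      C = (Finset.range b).image (fun i : ℕ => ((a : ℤ) - (b : ℤ) + 1 + 2 * i)) := by
  have := hC.two_dvd_fmax_sub_fmin
  have := hC.fmin_le_fmax
  set b : ℕ := ((fmax C - fmin C) / 2 + 1).toNat
  exact ⟨b, by omega, by omega, Nat.odd_iff.2 (by omega),
    hC.eq_image_range (by omega) (by omega)⟩

lemma not_disjoint_of_fmax_add_fmin_eq (hC : IsChainSet C) (hD : IsChainSet D)
    (hcentre : fmax C + fmin C = fmax D + fmin D) (hparity : 2 ∣ fmax D - fmax C) :
    ¬ Disjoint C D := by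
  wlog hle : fmax C ≤ fmax D generalizing C D
  · exact fun h => this hD hC hcentre.symm (by omega) (by omega) h.symm
  have hD_fmin_le := hD.fmin_le_fmax
  have hC_fmin_le := hC.fmin_le_fmax
  exact Finset.not_disjoint_iff.2
    ⟨fmax C, hC.fmax_mem, hD.mem_iff.2 ⟨by omega, hle, hparity⟩⟩

end IsChainSet

/-- **Example 3.3.** Let `U` be a collection of pairwise disjoint chains of positive
integers all having the same average value `(max C + min C)/2`, with smallest entry equal to
`1`.  Then either `U` is a single chain, or `U` consists of exactly the two chains
`{2a-1, 2a-3, …, 3, 1}` and `{a+b-1, a+b-3, …, a-b+1}` for some integers `a > b ≥ 1`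
with `a + b` odd. -/
theorem same_average_classification (U : Finset (Finset ℤ))
    (hchain : ∀ C ∈ U, IsChainSet C)
    (hdisj : ∀ C ∈ U, ∀ D ∈ U, C ≠ D → Disjoint C D)
    (havg : ∀ C ∈ U, ∀ D ∈ U, fmax C + fmin C = fmax D + fmin D)
    (hpos : ∀ C ∈ U, ∀ x ∈ C, 0 < x)
    (hone : ∃ C ∈ U, (1 : ℤ) ∈ C) :
    U.card = 1 ∨
      ∃ a b : ℕ, 1 ≤ b ∧ b < a ∧ Odd (a + b) ∧
        U = {(Finset.range a).image (fun i : ℕ => (2 * i + 1 : ℤ)),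
             (Finset.range b).image (fun i : ℕ => ((a : ℤ) - (b : ℤ) + 1 + 2 * i))} := by
  obtain ⟨C₀, hC₀, h1⟩ := hone
  have hfmin_pos : ∀ E ∈ U, 0 < fmin E := fun E hE => hpos E hE _ (hchain E hE).fmin_mem
  have hfmin₀ := (hchain C₀ hC₀).fmin_eq_one (hfmin_pos C₀ hC₀) h1
  obtain ⟨a, hfmax₀, hC₀_eq⟩ := (hchain C₀ hC₀).exists_eq_image_range_odd hfmin₀
  have heven : ∀ E ∈ U.erase C₀, 2 ∣ fmax E := by
    intro E hE
    obtain ⟨hE₀, hEU⟩ := Finset.mem_erase.1 hE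
    have : ¬ 2 ∣ fmax C₀ - fmax E := fun hpar =>
      (hchain E hEU).not_disjoint_of_fmax_add_fmin_eq (hchain C₀ hC₀) (havg E hEU C₀ hC₀)
        hpar (hdisj E hEU C₀ hC₀ hE₀)
    omega
  rcases (U.erase C₀).eq_empty_or_nonempty with hempty | ⟨D, hD⟩
  · left
    rw [← Finset.insert_erase hC₀, hempty]
    rfl
  obtain ⟨-, hDU⟩ := Finset.mem_erase.1 hD
  have hD_unique : ∀ E ∈ U.erase C₀, E = D := by
    intro E hE
    by_contra hED
    obtain ⟨-, hEU⟩ := Finset.mem_erase.1 hE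
    exact (hchain E hEU).not_disjoint_of_fmax_add_fmin_eq (hchain D hDU) (havg E hEU D hDU)
      (dvd_sub (heven D hD) (heven E hE)) (hdisj E hEU D hDU hED)
  obtain ⟨b, hb, hba, hab, hD_eq⟩ :=
    (hchain D hDU).exists_eq_image_range_of_fmax_add_fmin_eq (hfmin_pos D hDU)
      (by rw [havg D hDU C₀ hC₀, hfmin₀, hfmax₀]; ring) (heven D hD)
  refine Or.inr ⟨a, b, hb, hba, hab, ?_⟩
  rw [← hC₀_eq, ← hD_eq, ← Finset.insert_erase hC₀,
    Finset.eq_singleton_iff_unique_mem.2 ⟨hD, hD_unique⟩]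
end
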